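/- arXiv:2007.05348 — 2 statements merged into one kernel-verified Lean document; each statement's English description precedes it below -/
import Mathlib

section
/- Let G be a core input-output network and let (ρ₁, ρ₂) and (ρ₃, ρ₄) be pairs of adjacent super-simple nodes with ρ₃ downstream from ρ₂ in the super-simple order. (a) If ρ₃ ≠ ρ₂ and there is an arrow in G from a node ρ of L(ρ₁,ρ₂) to a node τ of L(ρ₃,ρ₄), then ρ = ρ₂, τ = ρ₃, and ρ₂ and ρ₃ are adjacent super-simple nodes. (b) If ρ₃ = ρ₂ (the two pairs share the node ρ₂) and there is an arrow in G from a node ρ of L(ρ₁,ρ₂) to a node τ of L(ρ₂,ρ₄), then ρ = ρ₂ or τ = ρ₂. -/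
open Classical MvPolynomial

/-- An input-output network: a digraph on node set `V` (`edge a b` means there is an
arrow `a → b`) with a distinguished input node `inp` and a distinct output node `out`. -/
structure IONetwork (V : Type) where
  edge : V → V → Prop
  inp : V
  out : V
  inp_ne_out : inp ≠ out

/-- A cycle: a list of nodes forming a directed path whose first and last nodes coincide. -/
def IsCycle {V : Type} (E : V → V → Prop) (p : List V) : Prop :=
  p.Chain' E ∧ 2 ≤ p.length ∧ p.head? = p.getLast?

/-- Reachability by a directed path all of whose nodes stay inside `W`. -/
def RestrictedReach {V : Type} (E : V → V → Prop) (W : Set V) (a b : V) : Prop :=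
  Relation.ReflTransGen (fun x y => E x y ∧ x ∈ W ∧ y ∈ W) a b

/-- `a` occurs strictly before `b` in the list `p` (both occurring in `p`). -/
def Before {V : Type} [DecidableEq V] (p : List V) (a b : V) : Prop :=
  a ∈ p ∧ b ∈ p ∧ p.idxOf a < p.idxOf b

namespace IONetwork

variable {V : Type}

/-- An ιo-simple path: a directed path from the input node to the output node
with pairwise distinct nodes. -/
def IsIOSimplePath (G : IONetwork V) (p : List V) : Prop :=
  p.Chain' G.edge ∧ p.head? = some G.inp ∧ p.getLast? = some G.out ∧ p.Nodup

/-- A core network: every node is downstream from the input node and upstream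
from the output node. -/
def IsCore (G : IONetwork V) : Prop :=
  ∀ v : V, Relation.ReflTransGen G.edge G.inp v ∧ Relation.ReflTransGen G.edge v G.out

/-- A simple node: a node lying on some ιo-simple path. -/
def SimpleNode (G : IONetwork V) (v : V) : Prop :=
  ∃ p, G.IsIOSimplePath p ∧ v ∈ p

/-- A super-simple node: a node lying on every ιo-simple path. -/
def SuperSimple (G : IONetwork V) (v : V) : Prop :=
  ∀ p, G.IsIOSimplePath p → v ∈ p

/-- Two super-simple nodes are adjacent (with `a` upstream of `b`) if every ιo-simple
path visits `a` strictly before `b` and no super-simple node occurs strictly between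
them on an ιo-simple path. -/
def SSAdjacent [DecidableEq V] (G : IONetwork V) (a b : V) : Prop :=
  G.SuperSimple a ∧ G.SuperSimple b ∧ a ≠ b ∧
  (∀ p, G.IsIOSimplePath p → Before p a b) ∧
  (∀ c, G.SuperSimple c → ∀ p, G.IsIOSimplePath p → ¬ (Before p a c ∧ Before p c b))

/-- The node `v` belongs to the super-simple subnetwork `L(a,b)` determined by adjacent
super-simple nodes `a`, `b`: either it is one of the endpoints or some ιo-simple path
visits `a`, `v`, `b` in that order. -/
def InL [DecidableEq V] (G : IONetwork V) (a b v : V) : Prop :=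
  v = a ∨ v = b ∨ ∃ p, G.IsIOSimplePath p ∧ Before p a v ∧ Before p v b

/-- An appendage path component: a strongly connected component of the appendage
subnetwork (the induced subnetwork on the nodes lying on no ιo-simple path). -/
def IsAppendagePathComponent (G : IONetwork V) (K : Set V) : Prop :=
  K.Nonempty ∧ (∀ v ∈ K, ¬ G.SimpleNode v) ∧
  (∀ a ∈ K, ∀ b ∈ K, RestrictedReach G.edge {v | ¬ G.SimpleNode v} a b) ∧
  (∀ v, ¬ G.SimpleNode v →
    (∃ a ∈ K, RestrictedReach G.edge {v | ¬ G.SimpleNode v} a v ∧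
              RestrictedReach G.edge {v | ¬ G.SimpleNode v} v a) → v ∈ K)

/-- The no-cycle condition for a set `K` of appendage nodes: no cycle of `G` contains
both a node of `K` and a simple node but no super-simple node. -/
def NoCycleCond (G : IONetwork V) (K : Set V) : Prop :=
  ¬ ∃ γ : List V, IsCycle G.edge γ ∧ (∃ v ∈ γ, v ∈ K) ∧
    (∃ v ∈ γ, G.SimpleNode v) ∧ (∀ v ∈ γ, ¬ G.SuperSimple v)

/-- The node set of the structural subnetwork `S_G`: all simple nodes together with all
nodes of cycle appendage path components (those violating the no-cycle condition). -/
def StructuralSet (G : IONetwork V) : Set V :=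
  {v | G.SimpleNode v ∨
    ∃ K : Set V, G.IsAppendagePathComponent K ∧ ¬ G.NoCycleCond K ∧ v ∈ K}

/-- The node set of the super-simple structural subnetwork `L'(a,b)`: the simple nodes of
`L(a,b)` together with all appendage nodes lying on a cycle of `G` containing a simple
node of `L(a,b)` but no super-simple node. -/
def LpSet [DecidableEq V] (G : IONetwork V) (a b : V) : Set V :=
  {v | G.InL a b v} ∪
  {v | ¬ G.SimpleNode v ∧ ∃ γ : List V, IsCycle G.edge γ ∧ v ∈ γ ∧
        (∃ w ∈ γ, G.InL a b w ∧ G.SimpleNode w) ∧ ∀ w ∈ γ, ¬ G.SuperSimple w}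

/-- The generic entry associated to the ordered pair of nodes `(c, r)` (source `c`,
target `r`): the coupling/self-coupling indeterminate `x_{c,r}` if `c = r` or there is
an arrow `c → r`, and `0` otherwise. -/
noncomputable def genEntry (G : IONetwork V) (c r : V) : MvPolynomial (V × V) ℚ :=
  if c = r ∨ G.edge c r then MvPolynomial.X (c, r) else 0

/-- The generic Jacobian of the induced subnetwork on `W` (rows = targets, columns =
sources). -/
noncomputable def genJac (G : IONetwork V) (W : Set V) :
    Matrix ↥W ↥W (MvPolynomial (V × V) ℚ) :=
  Matrix.of fun r c => G.genEntry c.1 r.1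

/-- The generic homeostasis matrix of `G`: the generic Jacobian on `V` with the row of
the input node and the column of the output node deleted. -/
noncomputable def genH (G : IONetwork V) :
    Matrix {v : V // v ≠ G.inp} {v : V // v ≠ G.out} (MvPolynomial (V × V) ℚ) :=
  Matrix.of fun r c => G.genEntry c.1 r.1

/-- The determinant of the generic homeostasis matrix of `G`, computed after fixing a
bijection `V∖{o} ≃ V∖{ι}`. -/
noncomputable def detH [Fintype V] (G : IONetwork V)
    (e : {v : V // v ≠ G.out} ≃ {v : V // v ≠ G.inp}) : MvPolynomial (V × V) ℚ :=
  Matrix.det (Matrix.of fun r c : {v : V // v ≠ G.out} => G.genH (e r) c)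

/-- The determinant of the generic homeostasis matrix of the induced input-output
subnetwork on `W` with input node `a` and output node `b`, computed after fixing a
bijection `W∖{b} ≃ W∖{a}`. -/
noncomputable def subDetH [Fintype V] (G : IONetwork V) (W : Set V) (a b : V)
    (e : {v : V // v ∈ W ∧ v ≠ b} ≃ {v : V // v ∈ W ∧ v ≠ a}) :
    MvPolynomial (V × V) ℚ :=
  Matrix.det (Matrix.of fun r c : {v : V // v ∈ W ∧ v ≠ b} =>
    G.genEntry c.1 (e r).1)

end IONetwork

/-- The product of the coupling indeterminates along the consecutive arrows of a path
(given as a list of nodes). -/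
noncomputable def pathProd {V : Type} (p : List V) : MvPolynomial (V × V) ℚ :=
  ((p.zip p.tail).map fun ab => MvPolynomial.X ab).prod

/-! A super-simple node `c` cannot be jumped over by an arrow: an arrow `x → y` with `x` before
`c` on one ιo-simple path and `y` after `c` on another gives a walk `ι ⇝ x → y ⇝ o` avoiding
`c`, which shortens to an ιo-simple path missing `c`. Every clause of the lemma is an instance:
an arrow out of `L(ρ₁,ρ₂)` to a node beyond `ρ₂` must leave from `ρ₂`, an arrow into `L(ρ₃,ρ₄)`
from a node before `ρ₃` must land on `ρ₃`, and a super-simple node strictly between `ρ₂` and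
`ρ₃` would be jumped by the arrow `ρ₂ → ρ₃`. -/

open Relation

namespace List

variable {α : Type} {r : α → α → Prop} {l : List α} {a b : α}

theorem IsChain.reflTransGen_of_forall_mem {P : α → Prop} (hl : l.IsChain r)
    (hP : ∀ v ∈ l, P v) (ha : l.head? = some a) (hb : l.getLast? = some b) :
    ReflTransGen (fun u v => r u v ∧ P u ∧ P v) a b := by
  have hne : l ≠ [] := by rintro rfl; simp at ha
  have hl' : l.IsChain (fun u v => r u v ∧ P u ∧ P v) :=
    hl.imp_of_mem_imp fun u v hu hv huv => ⟨huv, hP u hu, hP v hv⟩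
  have := relationReflTransGen_of_exists_isChain l hl' hne
  rwa [(head_eq_iff_head?_eq_some hne).2 ha, (getLast_eq_iff_getLast?_eq_some hne).2 hb] at this

theorem exists_nodup_isChain_of_reflTransGen [DecidableEq α] (h : ReflTransGen r a b) :
    ∃ l : List α, l.IsChain r ∧ l.head? = some a ∧ l.getLast? = some b ∧ l.Nodup := by
  induction h with
  | refl => exact ⟨[a], .singleton a, rfl, rfl, nodup_singleton a⟩
  | @tail b c _ hbc ih =>
    obtain ⟨l, hl, ha, hb, hn⟩ := ih
    by_cases hc : c ∈ l
    · refine ⟨l.take (l.idxOf c + 1), hl.take _, by simpa [head?_take] using ha, ?_,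
        hn.sublist (take_sublist _ _)⟩
      simp [getLast?_take, getElem?_idxOf hc]
    · refine ⟨l ++ [c], hl.append (.singleton c) ?_, ?_, by simp, ?_⟩
      · simp [hb, hbc]
      · obtain ⟨t, rfl⟩ := head?_eq_some_iff.1 ha
        simp
      · simp only [nodup_append, hn, nodup_singleton, mem_singleton, true_and]
        rintro x hx _ rfl rfl
        exact hc hx

end List

section Before

variable {α : Type} [DecidableEq α] {r : α → α → Prop} {l : List α} {a b c x y : α}

theorem Before.trans (h₁ : Before l a b) (h₂ : Before l b c) : Before l a c :=
  ⟨h₁.1, h₂.2.1, h₁.2.2.trans h₂.2.2⟩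

theorem Before.reflTransGen_of_head?_eq (h : Before l x c) (hl : l.IsChain r)
    (ha : l.head? = some a) : ReflTransGen (fun u v => r u v ∧ u ≠ c ∧ v ≠ c) a x := by
  obtain ⟨hx, hc, hxc⟩ := h
  refine (hl.take (l.idxOf x + 1)).reflTransGen_of_forall_mem ?_ (by simpa [List.head?_take])
    (by simp [List.getLast?_take, List.getElem?_idxOf hx])
  rintro v hv rfl
  have := (List.mem_take_iff_idxOf_lt hc).1 hv
  omega

theorem Before.reflTransGen_of_getLast?_eq (h : Before l c y) (hl : l.IsChain r) (hn : l.Nodup)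
    (hb : l.getLast? = some b) : ReflTransGen (fun u v => r u v ∧ u ≠ c ∧ v ≠ c) y b := by
  obtain ⟨hc, hy, hcy⟩ := h
  have hc_take : c ∈ l.take (l.idxOf y) := (List.mem_take_iff_idxOf_lt hc).2 hcy
  refine (hl.drop (l.idxOf y)).reflTransGen_of_forall_mem ?_ (by simp [List.getElem?_idxOf hy])
    (by simpa [List.getLast?_drop, List.idxOf_lt_length_iff.2 hy])
  rintro v hv rfl
  exact List.disjoint_take_drop hn le_rfl hc_take hv

end Before

namespace IONetwork

variable {V : Type} {G : IONetwork V}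

theorem exists_isIOSimplePath_of_reflTransGen [DecidableEq V] {P : V → Prop}
    (h : ReflTransGen (fun u v => G.edge u v ∧ P u ∧ P v) G.inp G.out) :
    ∃ p, G.IsIOSimplePath p ∧ ∀ v ∈ p, P v := by
  have hinp : P G.inp := by
    rcases h.cases_head with heq | ⟨_, ⟨_, hP, _⟩, _⟩
    · exact absurd heq G.inp_ne_out
    · exact hP
  obtain ⟨p, hp, hh, hl, hn⟩ := List.exists_nodup_isChain_of_reflTransGen h
  refine ⟨p, ⟨hp.imp fun _ _ e => e.1, hh, hl, hn⟩, ?_⟩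
  refine hp.induction P p (fun _ _ e _ => e.2.2) fun hne => ?_
  rwa [(List.head_eq_iff_head?_eq_some hne).2 hh]

theorem IsCore.exists_isIOSimplePath [DecidableEq V] (hG : G.IsCore) :
    ∃ p, G.IsIOSimplePath p :=
  List.exists_nodup_isChain_of_reflTransGen (hG G.out).1

theorem SuperSimple.not_edge_of_before [DecidableEq V] {c x y : V} {p q : List V}
    (hc : G.SuperSimple c) (hp : G.IsIOSimplePath p) (hq : G.IsIOSimplePath q)
    (hxc : Before p x c) (hcy : Before q c y) : ¬ G.edge x y := by
  intro e
  have hx : x ≠ c := fun h => by simp [h, Before] at hxc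
  have hy : y ≠ c := fun h => by simp [h, Before] at hcy
  have hwalk := (hxc.reflTransGen_of_head?_eq hp.1 hp.2.1).trans <|
    .head ⟨e, hx, hy⟩ (hcy.reflTransGen_of_getLast?_eq hq.1 hq.2.2.2 hq.2.2.1)
  obtain ⟨s, hs, hsc⟩ := exists_isIOSimplePath_of_reflTransGen hwalk
  exact hsc c (hc s hs) rfl

namespace SSAdjacent

variable [DecidableEq V] {a b v ρ τ : V} {q : List V}

theorem before (hab : G.SSAdjacent a b) (hq : G.IsIOSimplePath q) : Before q a b :=
  hab.2.2.2.1 q hq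

theorem exists_before_of_inL_of_ne_left (hab : G.SSAdjacent a b) (hq : G.IsIOSimplePath q)
    (hv : G.InL a b v) (hva : v ≠ a) : ∃ p, G.IsIOSimplePath p ∧ Before p a v := by
  rcases hv with rfl | rfl | ⟨p, hp, hav, -⟩
  · exact absurd rfl hva
  · exact ⟨q, hq, hab.before hq⟩
  · exact ⟨p, hp, hav⟩

theorem exists_before_of_inL_of_ne_right (hab : G.SSAdjacent a b) (hq : G.IsIOSimplePath q)
    (hv : G.InL a b v) (hvb : v ≠ b) : ∃ p, G.IsIOSimplePath p ∧ Before p v b := by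
  rcases hv with rfl | rfl | ⟨p, hp, -, hvb⟩
  · exact ⟨q, hq, hab.before hq⟩
  · exact absurd rfl hvb
  · exact ⟨p, hp, hvb⟩

theorem eq_right_of_inL_of_edge (hab : G.SSAdjacent a b) (hρ : G.InL a b ρ) (e : G.edge ρ τ)
    (hq : G.IsIOSimplePath q) (hbτ : Before q b τ) : ρ = b := by
  by_contra hρb
  obtain ⟨p, hp, hρb⟩ := hab.exists_before_of_inL_of_ne_right hq hρ hρb
  exact hab.2.1.not_edge_of_before hp hq hρb hbτ e

theorem eq_left_of_inL_of_edge (hab : G.SSAdjacent a b) (hτ : G.InL a b τ) (e : G.edge ρ τ)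
    (hq : G.IsIOSimplePath q) (hρa : Before q ρ a) : τ = a := by
  by_contra hτa
  obtain ⟨p, hp, haτ⟩ := hab.exists_before_of_inL_of_ne_left hq hτ hτa
  exact hab.1.not_edge_of_before hq hp hρa haτ e

end SSAdjacent

end IONetwork

theorem stmt_9_general {V : Type} [DecidableEq V] (G : IONetwork V)
    (hcore : G.IsCore) (ρ₁ ρ₂ ρ₃ ρ₄ : V)
    (h12 : G.SSAdjacent ρ₁ ρ₂) (h34 : G.SSAdjacent ρ₃ ρ₄)
    (hdown : ∀ p : List V, G.IsIOSimplePath p → (ρ₃ = ρ₂ ∨ Before p ρ₂ ρ₃)) :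
    (∀ ρ τ : V, ρ₃ ≠ ρ₂ → G.InL ρ₁ ρ₂ ρ → G.InL ρ₃ ρ₄ τ → G.edge ρ τ →
        ρ = ρ₂ ∧ τ = ρ₃ ∧ G.SSAdjacent ρ₂ ρ₃) ∧
    (∀ ρ τ : V, ρ₃ = ρ₂ → G.InL ρ₁ ρ₂ ρ → G.InL ρ₂ ρ₄ τ → G.edge ρ τ →
        ρ = ρ₂ ∨ τ = ρ₂) := by
  obtain ⟨p₀, hp₀⟩ := hcore.exists_isIOSimplePath
  refine ⟨fun ρ τ hne hρ hτ e => ?_, fun ρ τ heq hρ hτ e => ?_⟩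
  · have h23 : ∀ p, G.IsIOSimplePath p → Before p ρ₂ ρ₃ :=
      fun p hp => (hdown p hp).resolve_left hne
    obtain ⟨q, hq, h2τ⟩ : ∃ q, G.IsIOSimplePath q ∧ Before q ρ₂ τ := by
      by_cases hτ3 : τ = ρ₃
      · exact ⟨p₀, hp₀, hτ3 ▸ h23 p₀ hp₀⟩
      obtain ⟨q, hq, h3τ⟩ := h34.exists_before_of_inL_of_ne_left hp₀ hτ hτ3
      exact ⟨q, hq, (h23 q hq).trans h3τ⟩
    obtain rfl := h12.eq_right_of_inL_of_edge hρ e hq h2τ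
    obtain rfl := h34.eq_left_of_inL_of_edge hτ e hp₀ (h23 p₀ hp₀)
    exact ⟨rfl, rfl, h12.2.1, h34.1, Ne.symm hne, h23,
      fun c hc p hp ⟨h2c, hc3⟩ => hc.not_edge_of_before hp hp h2c hc3 e⟩
  · subst heq
    by_cases hτ3 : τ = ρ₃
    · exact .inr hτ3
    obtain ⟨q, hq, h3τ⟩ := h34.exists_before_of_inL_of_ne_left hp₀ hτ hτ3
    exact .inl (h12.eq_right_of_inL_of_edge hρ e hq h3τ)

/-- Lemma 6.3 (a),(b).  Let `(ρ₁,ρ₂)` and `(ρ₃,ρ₄)` be pairs of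
adjacent super-simple nodes with `ρ₃` downstream from `ρ₂` in the super-simple order.
(a) If `ρ₃ ≠ ρ₂` and there is an arrow from `ρ ∈ L(ρ₁,ρ₂)` to `τ ∈ L(ρ₃,ρ₄)`, then
`ρ = ρ₂`, `τ = ρ₃`, and `ρ₂`, `ρ₃` are adjacent super-simple nodes.
(b) If `ρ₃ = ρ₂` and there is an arrow from `ρ ∈ L(ρ₁,ρ₂)` to `τ ∈ L(ρ₂,ρ₄)`, then
`ρ = ρ₂` or `τ = ρ₂`. -/
theorem stmt_9 {V : Type} [Fintype V] [DecidableEq V] (G : IONetwork V)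
    (hcore : G.IsCore) (ρ₁ ρ₂ ρ₃ ρ₄ : V)
    (h12 : G.SSAdjacent ρ₁ ρ₂) (h34 : G.SSAdjacent ρ₃ ρ₄)
    (hdown : ∀ p : List V, G.IsIOSimplePath p → (ρ₃ = ρ₂ ∨ Before p ρ₂ ρ₃)) :
    (∀ ρ τ : V, ρ₃ ≠ ρ₂ → G.InL ρ₁ ρ₂ ρ → G.InL ρ₃ ρ₄ τ → G.edge ρ τ →
        ρ = ρ₂ ∧ τ = ρ₃ ∧ G.SSAdjacent ρ₂ ρ₃) ∧
    (∀ ρ τ : V, ρ₃ = ρ₂ → G.InL ρ₁ ρ₂ ρ → G.InL ρ₂ ρ₄ τ → G.edge ρ τ →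
        ρ = ρ₂ ∨ τ = ρ₂) :=
  stmt_9_general G hcore ρ₁ ρ₂ ρ₃ ρ₄ h12 h34 hdown
end

section
/- Let G be a core input-output network on node set V with generic homeostasis matrix H. Suppose permutations of the rows and columns of H produce a block upper triangular form having an irreducible k × k diagonal block B_η of structural class: there are distinct nodes ℓ, j, ρ₁, …, ρ_{k−1} ∈ V such that the rows of B_η are the rows of H indexed by {ρ₁, …, ρ_{k−1}, j}, the columns of B_η are the columns of H indexed by {ℓ, ρ₁, …, ρ_{k−1}}, and B_η contains exactly the k−1 self-couplings x_{ρᵢ,ρᵢ} (neither x_{ℓ,ℓ} nor x_{j,j}); irreducibility means no row and column permutations bring B_η into nontrivial block upper triangular form. Then ℓ and j are adjacent super-simple nodes of G, and no node among ρ₁, …, ρ_{k−1} is super-simple (the associated input-output subnetwork K_η on {ℓ, ρ₁, …, ρ_{k−1}, j} contains exactly two super-simple nodes of G, namely its input node ℓ and its output node j). -/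
open Classical MvPolynomial

/-!
The diagonal self-couplings force the index sets of the outer blocks to match up to one node:
`C₁ ∪ {ℓ} = R₁ ∪ {ι}` and `R₃ ∪ {j} = C₃ ∪ {o}`, since `|R₁| = |C₁|`, `|R₃| = |C₃|`, and the
self-coupling of a node cannot lie in a zero block. Call these sets `U` and `D`; with `K` they
partition `V`. The zero blocks below the diagonal then say that an arrow leaves `U` only from `ℓ`
and enters `D` only at `j`. So every ιo-simple path runs inside `U` up to `ℓ`, then through `K`,
and from `j` on inside `D`. Hence `ℓ` and `j` are super-simple, `ℓ` comes before `j`, and every node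
strictly between them lies in `K`.

If some `v ∈ K` were super-simple, let `R` be the set of nodes reachable from `ι` without passing
through `v`. Then `ℓ ∈ R` and `j ∉ R`. No arrow goes from `R` to a node `≠ v` outside `R`, so the
rows `{j} ∪ (K ∖ R ∖ {v})` and the columns `{ℓ} ∪ (K ∩ R)` of `B_η` span a zero submatrix whose
dimensions add up to `|K| + 1`. That contradicts the irreducibility of `B_η`.
-/

theorem Set.union_singleton_eq_of_subset_of_ncard_eq {α : Type*} {A B : Set α} {a b : α}
    (hB : B.Finite) (ha : a ∉ A) (hsub : A ∪ {a} ⊆ B ∪ {b}) (hcard : B.ncard = A.ncard) :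
    A ∪ {a} = B ∪ {b} := by
  have hBb : (B ∪ {b}).Finite := hB.union (Set.finite_singleton b)
  have hA : A.Finite := hBb.subset (Set.subset_union_left.trans hsub)
  refine Set.eq_of_subset_of_ncard_le hsub ?_ hBb
  rw [Set.union_singleton, Set.union_singleton, Set.ncard_insert_of_notMem ha hA, ← hcard]
  exact Set.ncard_insert_le b B

theorem Relation.ReflTransGen.exists_nodup_isChain {α : Type*} {r : α → α → Prop} {a b : α}
    (h : ReflTransGen r a b) :
    ∃ p : List α, p.IsChain r ∧ p.head? = some a ∧ p.getLast? = some b ∧ p.Nodup := by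
  induction h using ReflTransGen.head_induction_on with
  | refl => exact ⟨[b], .singleton b, rfl, rfl, List.nodup_singleton b⟩
  | @head x c hxc _ ih =>
    obtain ⟨p, hc, hh, hl, hn⟩ := ih
    by_cases hx : x ∈ p
    · obtain ⟨s, t, rfl⟩ := List.append_of_mem hx
      have hsuf : (x :: t) <:+ (s ++ x :: t) := ⟨s, rfl⟩
      refine ⟨x :: t, hc.suffix hsuf, rfl, ?_, hn.sublist hsuf.sublist⟩
      rwa [List.getLast?_append_of_ne_nil _ (List.cons_ne_nil _ _)] at hl
    · obtain ⟨ys, rfl⟩ := List.head?_eq_some_iff.mp hh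
      exact ⟨x :: c :: ys, hc.cons_cons hxc, rfl, hl, List.nodup_cons.mpr ⟨hx, hn⟩⟩

section Gates

variable {V : Type} {E : V → V → Prop} {S W W' : Set V} {a b e : V}

theorem RestrictedReach.mono (hW : W ⊆ W') (h : RestrictedReach E W a b) :
    RestrictedReach E W' a b :=
  Relation.ReflTransGen.mono (fun _ _ ⟨hxy, hx, hy⟩ => ⟨hxy, hW hx, hW hy⟩) _ _ h

theorem RestrictedReach.left_mem (h : RestrictedReach E W a b) (hab : a ≠ b) : a ∈ W := by
  rcases h.cases_head with rfl | ⟨_, ⟨_, ha, _⟩, _⟩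
  exacts [absurd rfl hab, ha]

theorem RestrictedReach.right_mem (h : RestrictedReach E W a b) (hab : a ≠ b) : b ∈ W := by
  rcases h.cases_tail with rfl | ⟨_, _, ⟨_, _, hb⟩⟩
  exacts [absurd rfl hab, hb]

theorem RestrictedReach.exists_nodup_isChain (h : RestrictedReach E W a b) (hab : a ≠ b) :
    ∃ p : List V, p.IsChain E ∧ p.head? = some a ∧ p.getLast? = some b ∧ p.Nodup ∧
      ∀ x ∈ p, x ∈ W := by
  obtain ⟨p, hc, hh, hl, hn⟩ := Relation.ReflTransGen.exists_nodup_isChain h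
  refine ⟨p, hc.imp fun _ _ h => h.1, hh, hl, hn,
    hc.induction _ _ (fun _ _ h _ => h.2.2) fun _ => ?_⟩
  obtain ⟨t, rfl⟩ := List.head?_eq_some_iff.mp hh
  exact h.left_mem hab

def ExitsThrough (E : V → V → Prop) (S : Set V) (e : V) : Prop :=
  ∀ x y, E x y → x ∈ S → y ∉ S → x = e

def EntersThrough (E : V → V → Prop) (S : Set V) (e : V) : Prop :=
  ∀ x y, E x y → x ∉ S → y ∈ S → y = e

theorem ExitsThrough.restrictedReach (hS : ExitsThrough E S e)
    (h : Relation.ReflTransGen E a b) (ha : a ∈ S) (hb : b ∉ S) : RestrictedReach E S a e := by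
  induction h using Relation.ReflTransGen.head_induction_on with
  | refl => exact absurd ha hb
  | @head x c hxc _ ih =>
    by_cases hc : c ∈ S
    · exact .head ⟨hxc, ha, hc⟩ (ih hc)
    · exact hS x c hxc ha hc ▸ .refl

theorem EntersThrough.restrictedReach (hS : EntersThrough E S e)
    (h : Relation.ReflTransGen E a b) (ha : a ∉ S) (hb : b ∈ S) : RestrictedReach E S e b := by
  induction h with
  | refl => exact absurd hb ha
  | @tail c y _ hcy ih =>
    by_cases hc : c ∈ S
    · exact .tail (ih hc) ⟨hcy, hc, hb⟩
    · exact hS c y hcy hc hb ▸ .refl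

theorem ExitsThrough.forall_not_mem (hS : ExitsThrough E S e) {p : List V} (hc : p.IsChain E)
    (he : e ∉ p) (hl : ∀ z ∈ p.getLast?, z ∉ S) : ∀ x ∈ p, x ∉ S :=
  (List.IsChain.iff_mem.mp hc).backwards_induction (· ∉ S) p
    (fun x y ⟨hx, _, hxy⟩ hy hxS => he (hS x y hxy hxS hy ▸ hx))
    (fun hne => hl _ (List.getLast?_eq_some_getLast hne))

theorem EntersThrough.forall_mem (hS : EntersThrough E S e) {p : List V} (hc : p.IsChain E)
    (he : e ∉ p.tail) (hl : ∀ z ∈ p.getLast?, z ∈ S) : ∀ x ∈ p, x ∈ S :=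
  (List.IsChain.iff_mem_mem_tail.mp hc).backwards_induction (· ∈ S) p
    (fun x y ⟨_, hy, hxy⟩ hyS => by_contra fun hxS => he (hS x y hxy hxS hyS ▸ hy))
    (fun hne => hl _ (List.getLast?_eq_some_getLast hne))

variable [DecidableEq V]

theorem ExitsThrough.mem_iff_idxOf_le (hS : ExitsThrough E S e) :
    ∀ {x : V} {q : List V}, (x :: q).IsChain E → (x :: q).Nodup → x ∈ S →
      (∀ z ∈ (x :: q).getLast?, z ∉ S) →
      e ∈ x :: q ∧ ∀ y ∈ x :: q, (y ∈ S ↔ (x :: q).idxOf y ≤ (x :: q).idxOf e)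
  | x, [], _, _, hx, hl => absurd hx (hl x rfl)
  | x, y :: q, hc, hn, hx, hl => by
    have hxq : x ∉ y :: q := (List.nodup_cons.mp hn).1
    have hl' : ∀ z ∈ (y :: q).getLast?, z ∉ S := by simpa using hl
    by_cases hxe : x = e
    · subst hxe
      have hout := hS.forall_not_mem hc.tail hxq hl'
      refine ⟨List.mem_cons_self, fun z hz => ?_⟩
      rcases List.mem_cons.mp hz with rfl | hz
      · simp [hx]
      · simp [List.idxOf_cons_ne _ (ne_of_mem_of_not_mem hz hxq).symm, hout z hz]
    · have hy : y ∈ S := by_contra fun hy => hxe (hS x y hc.rel hx hy)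
      obtain ⟨he, hiff⟩ := hS.mem_iff_idxOf_le hc.tail hn.of_cons hy hl'
      refine ⟨List.mem_cons_of_mem _ he, fun z hz => ?_⟩
      rcases List.mem_cons.mp hz with rfl | hz
      · simp [hx]
      · rw [List.idxOf_cons_ne _ (ne_of_mem_of_not_mem hz hxq).symm,
          List.idxOf_cons_ne _ hxe, hiff z hz, Nat.succ_le_succ_iff]

theorem EntersThrough.mem_iff_le_idxOf (hS : EntersThrough E S e) :
    ∀ {x : V} {q : List V}, (x :: q).IsChain E → (x :: q).Nodup → x ∉ S →
      (∀ z ∈ (x :: q).getLast?, z ∈ S) →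
      e ∈ x :: q ∧ ∀ y ∈ x :: q, (y ∈ S ↔ (x :: q).idxOf e ≤ (x :: q).idxOf y)
  | x, [], _, _, hx, hl => absurd (hl x rfl) hx
  | x, y :: q, hc, hn, hx, hl => by
    have hxq : x ∉ y :: q := (List.nodup_cons.mp hn).1
    have hl' : ∀ z ∈ (y :: q).getLast?, z ∈ S := by simpa using hl
    by_cases hy : y ∈ S
    · obtain rfl : y = e := hS x y hc.rel hx hy
      have hin := hS.forall_mem hc.tail (List.nodup_cons.mp hn.of_cons).1 hl'
      have hxy := (ne_of_mem_of_not_mem List.mem_cons_self hxq).symm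
      refine ⟨List.mem_cons_of_mem _ List.mem_cons_self, fun z hz => ?_⟩
      rcases List.mem_cons.mp hz with rfl | hz
      · simp [hx, List.idxOf_cons_ne _ hxy]
      · simp [List.idxOf_cons_ne _ (ne_of_mem_of_not_mem hz hxq).symm, hin z hz,
          List.idxOf_cons_ne _ hxy]
    · obtain ⟨he, hiff⟩ := hS.mem_iff_le_idxOf hc.tail hn.of_cons hy hl'
      have hxe : x ≠ e := (ne_of_mem_of_not_mem ((hiff e he).mpr le_rfl) hx).symm
      refine ⟨List.mem_cons_of_mem _ he, fun z hz => ?_⟩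
      rcases List.mem_cons.mp hz with rfl | hz
      · simp [hx, List.idxOf_cons_ne _ hxe]
      · rw [List.idxOf_cons_ne _ (ne_of_mem_of_not_mem hz hxq).symm,
          List.idxOf_cons_ne _ hxe, hiff z hz, Nat.succ_le_succ_iff]

end Gates

namespace IONetwork

variable {V : Type}

theorem genEntry_self_ne_zero (G : IONetwork V) (a : V) : G.genEntry a a ≠ 0 := by
  simp [genEntry, MvPolynomial.X_ne_zero]

theorem genEntry_ne_zero_of_edge {G : IONetwork V} {a b : V} (h : G.edge a b) :
    G.genEntry a b ≠ 0 := by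
  simp [genEntry, h, MvPolynomial.X_ne_zero]

/-- Row and column permutations can bring the block with rows `Rows` and columns `Cols` into
nontrivial block upper triangular form. -/
def IsReducibleBlock (G : IONetwork V) (Rows Cols : Set V) : Prop :=
  ∃ Rs Cs : Set V, Rs ⊆ Rows ∧ Cs ⊆ Cols ∧ Rs.Nonempty ∧ Cs.Nonempty ∧
    Rs.ncard + Cs.ncard = Rows.ncard ∧ ∀ r ∈ Rs, ∀ c ∈ Cs, G.genEntry c r = 0

theorem SuperSimple.not_restrictedReach {G : IONetwork V} {v : V} (hv : G.SuperSimple v) :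
    ¬ RestrictedReach G.edge {v}ᶜ G.inp G.out := fun h => by
  obtain ⟨p, hc, hh, hl, hn, hW⟩ := h.exists_nodup_isChain G.inp_ne_out
  exact hW v (hv p ⟨hc, hh, hl, hn⟩) rfl

structure IsGatedSplit (G : IONetwork V) (U K D : Set V) (l j : V) : Prop where
  inp_mem : G.inp ∈ U
  out_mem : G.out ∈ D
  cover : ∀ x, x ∈ U ∨ x ∈ K ∨ x ∈ D
  disjoint_upstream : Disjoint U K
  disjoint_downstream : Disjoint K D
  disjoint_ends : Disjoint U D
  exitsThrough : ExitsThrough G.edge U l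
  entersThrough : EntersThrough G.edge D j

section GatedSplit

variable {G : IONetwork V} {U K D : Set V} {l j : V}

theorem IsGatedSplit.before_of_isIOSimplePath [DecidableEq V] (hB : G.IsGatedSplit U K D l j)
    {p : List V} (hp : G.IsIOSimplePath p) :
    Before p l j ∧ ∀ c, Before p l c → Before p c j → c ∈ K := by
  obtain ⟨hc, hh, hl, hn⟩ := hp
  obtain ⟨q, rfl⟩ := List.head?_eq_some_iff.mp hh
  have hoU : ∀ z ∈ (G.inp :: q).getLast?, z ∉ U := by
    rintro z hz; rw [hl] at hz; cases hz; exact hB.disjoint_ends.notMem_of_mem_right hB.out_mem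
  have hoD : ∀ z ∈ (G.inp :: q).getLast?, z ∈ D := by
    rintro z hz; rw [hl] at hz; cases hz; exact hB.out_mem
  obtain ⟨hlp, hU⟩ := hB.exitsThrough.mem_iff_idxOf_le hc hn hB.inp_mem hoU
  obtain ⟨hjp, hD⟩ := hB.entersThrough.mem_iff_le_idxOf hc hn
    (hB.disjoint_ends.notMem_of_mem_left hB.inp_mem) hoD
  have hlj : (G.inp :: q).idxOf l < (G.inp :: q).idxOf j := lt_of_not_ge fun h =>
    hB.disjoint_ends.notMem_of_mem_left ((hU j hjp).mpr h) ((hD j hjp).mpr le_rfl)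
  refine ⟨⟨hlp, hjp, hlj⟩, fun c ⟨_, hcp, hlc⟩ ⟨_, _, hcj⟩ => ?_⟩
  rcases hB.cover c with h | h | h
  · exact absurd ((hU c hcp).mp h) (by omega)
  · exact h
  · exact absurd ((hD c hcp).mp h) (by omega)

theorem IsGatedSplit.isReducibleBlock (hB : G.IsGatedSplit U K D l j) (hcore : G.IsCore)
    (hK : K.Finite) (hl : l ∉ K) (hj : j ∉ K) {v : V} (hv : v ∈ K) (hss : G.SuperSimple v) :
    G.IsReducibleBlock (K ∪ {j}) (K ∪ {l}) := by
  have hwalk := (hcore G.out).1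
  have hvU : v ∉ U := hB.disjoint_upstream.notMem_of_mem_right hv
  have hvD : v ∉ D := hB.disjoint_downstream.notMem_of_mem_left hv
  have hreach_l : RestrictedReach G.edge {v}ᶜ G.inp l :=
    (hB.exitsThrough.restrictedReach hwalk hB.inp_mem
      (hB.disjoint_ends.notMem_of_mem_right hB.out_mem)).mono
      fun x hx => ne_of_mem_of_not_mem hx hvU
  have hreach_out : RestrictedReach G.edge {v}ᶜ j G.out :=
    (hB.entersThrough.restrictedReach hwalk
      (hB.disjoint_ends.notMem_of_mem_left hB.inp_mem) hB.out_mem).mono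
      fun x hx => ne_of_mem_of_not_mem hx hvD
  set R := {u | RestrictedReach G.edge {v}ᶜ G.inp u}
  have hjR : j ∉ R := fun h => hss.not_restrictedReach (h.trans hreach_out)
  have hvR : v ∉ R := fun h => h.right_mem (ne_of_mem_of_not_mem hB.inp_mem hvU) rfl
  refine ⟨insert j ((K \ R) \ {v}), insert l (K ∩ R), ?_, ?_, ⟨j, Set.mem_insert _ _⟩,
    ⟨l, Set.mem_insert _ _⟩, ?_, ?_⟩
  · exact Set.insert_subset (Or.inr rfl) (Set.sdiff_subset.trans Set.sdiff_subset |>.trans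
      Set.subset_union_left)
  · exact Set.insert_subset (Or.inr rfl) (Set.inter_subset_left.trans Set.subset_union_left)
  · have hsplit := Set.ncard_inter_add_ncard_sdiff_eq_ncard K R hK
    have hremove := Set.ncard_sdiff_singleton_add_one (show v ∈ K \ R from ⟨hv, hvR⟩) hK.sdiff
    rw [Set.ncard_insert_of_notMem (fun h => hj h.1.1) hK.sdiff.sdiff,
      Set.ncard_insert_of_notMem (fun h => hl h.1) (hK.inter_of_left R),
      Set.union_singleton, Set.ncard_insert_of_notMem hj hK]
    omega
  · rintro r hr c hc
    have hrR : r ∉ R ∧ r ≠ v := by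
      rcases hr with rfl | ⟨⟨_, hrR⟩, hrv⟩
      exacts [⟨hjR, ne_of_mem_of_not_mem hv hj |>.symm⟩, ⟨hrR, hrv⟩]
    have hcR : c ∈ R := by
      rcases hc with rfl | ⟨_, hcR⟩
      exacts [hreach_l, hcR]
    rw [genEntry, if_neg]
    rintro (rfl | he)
    exacts [hrR.1 hcR, hrR.1 (hcR.tail ⟨he, ne_of_mem_of_not_mem hcR hvR, hrR.2⟩)]

end GatedSplit

section BlockTriangular

variable {G : IONetwork V} {Kmid R1 R3 C1 C3 : Set V} {vl vj : V}

theorem union_singleton_eq_union_inp [Finite V] (hvlj : vl ≠ vj) (hvl : vl ∉ Kmid)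
    (hrowpart : R1 ∪ (Kmid ∪ {vj}) ∪ R3 = {v : V | v ≠ G.inp})
    (hd4 : Disjoint C1 (Kmid ∪ {vl})) (hsq1 : R1.ncard = C1.ncard)
    (hz1 : ∀ r ∈ (Kmid ∪ {vj}) ∪ R3, ∀ c ∈ C1, G.genEntry c r = 0)
    (hz2 : ∀ r ∈ R3, ∀ c ∈ C1 ∪ (Kmid ∪ {vl}), G.genEntry c r = 0) :
    C1 ∪ {vl} = R1 ∪ {G.inp} := by
  refine Set.union_singleton_eq_of_subset_of_ncard_eq R1.toFinite
    (fun h => hd4.notMem_of_mem_left h (Or.inr rfl)) (fun x hx => ?_) hsq1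
  by_cases hxi : x = G.inp
  · exact Or.inr hxi
  have hrow : x ∈ R1 ∪ (Kmid ∪ {vj}) ∪ R3 := hrowpart ▸ hxi
  rcases hrow with (h | h) | h
  · exact Or.inl h
  · rcases hx with hx | rfl
    · exact absurd (hz1 x (Or.inl h) x hx) (G.genEntry_self_ne_zero x)
    · rcases h with h | h
      exacts [absurd h hvl, absurd h hvlj]
  · refine absurd (hz2 x h x ?_) (G.genEntry_self_ne_zero x)
    rcases hx with hx | hx
    exacts [Or.inl hx, Or.inr (Or.inr hx)]

theorem union_singleton_eq_union_out [Finite V] (hvlj : vl ≠ vj) (hvj : vj ∉ Kmid)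
    (hcolpart : C1 ∪ (Kmid ∪ {vl}) ∪ C3 = {v : V | v ≠ G.out})
    (hd3 : Disjoint (Kmid ∪ {vj}) R3) (hsq3 : R3.ncard = C3.ncard)
    (hz1 : ∀ r ∈ (Kmid ∪ {vj}) ∪ R3, ∀ c ∈ C1, G.genEntry c r = 0)
    (hz2 : ∀ r ∈ R3, ∀ c ∈ C1 ∪ (Kmid ∪ {vl}), G.genEntry c r = 0) :
    R3 ∪ {vj} = C3 ∪ {G.out} := by
  refine Set.union_singleton_eq_of_subset_of_ncard_eq C3.toFinite
    (hd3.notMem_of_mem_left (Or.inr rfl)) (fun x hx => ?_) hsq3.symm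
  by_cases hxo : x = G.out
  · exact Or.inr hxo
  have hcol : x ∈ C1 ∪ (Kmid ∪ {vl}) ∪ C3 := hcolpart ▸ hxo
  have hrow : x ∈ (Kmid ∪ {vj}) ∪ R3 := by
    rcases hx with hx | hx
    exacts [Or.inr hx, Or.inl (Or.inr hx)]
  rcases hcol with (h | h) | h
  · exact absurd (hz1 x hrow x h) (G.genEntry_self_ne_zero x)
  · rcases hx with hx | rfl
    · exact absurd (hz2 x hx x (Or.inr h)) (G.genEntry_self_ne_zero x)
    · rcases h with h | h
      exacts [absurd h hvj, absurd h.symm hvlj]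
  · exact Or.inl h

theorem isGatedSplit_of_blockTriangular [Finite V] (hvlj : vl ≠ vj) (hvl : vl ∉ Kmid)
    (hvj : vj ∉ Kmid) (hrowpart : R1 ∪ (Kmid ∪ {vj}) ∪ R3 = {v : V | v ≠ G.inp})
    (hcolpart : C1 ∪ (Kmid ∪ {vl}) ∪ C3 = {v : V | v ≠ G.out})
    (hd3 : Disjoint (Kmid ∪ {vj}) R3) (hd4 : Disjoint C1 (Kmid ∪ {vl}))
    (hsq1 : R1.ncard = C1.ncard) (hsq3 : R3.ncard = C3.ncard)
    (hz1 : ∀ r ∈ (Kmid ∪ {vj}) ∪ R3, ∀ c ∈ C1, G.genEntry c r = 0)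
    (hz2 : ∀ r ∈ R3, ∀ c ∈ C1 ∪ (Kmid ∪ {vl}), G.genEntry c r = 0) :
    G.IsGatedSplit (C1 ∪ {vl}) Kmid (R3 ∪ {vj}) vl vj := by
  have hU := union_singleton_eq_union_inp hvlj hvl hrowpart hd4 hsq1 hz1 hz2
  have hD := union_singleton_eq_union_out hvlj hvj hcolpart hd3 hsq3 hz1 hz2
  refine ⟨hU ▸ Or.inr rfl, hD ▸ Or.inr rfl, fun x => ?_, ?_, ?_, ?_, ?_, ?_⟩
  · by_cases hxo : x = G.out
    · exact Or.inr (Or.inr (hD ▸ Or.inr hxo))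
    have hcol : x ∈ C1 ∪ (Kmid ∪ {vl}) ∪ C3 := hcolpart ▸ hxo
    rcases hcol with (h | h | h) | h
    exacts [Or.inl (Or.inl h), Or.inr (Or.inl h), Or.inl (Or.inr h),
      Or.inr (Or.inr (hD ▸ Or.inl h))]
  · refine Set.disjoint_left.mpr ?_
    rintro x (hx | rfl) hK
    exacts [hd4.notMem_of_mem_left hx (Or.inl hK), hvl hK]
  · refine Set.disjoint_left.mpr ?_
    rintro x hK (hx | rfl)
    exacts [hd3.notMem_of_mem_left (Or.inl hK) hx, hvj hK]
  · refine Set.disjoint_left.mpr ?_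
    rintro x (hx | rfl) (hy | hy)
    · exact G.genEntry_self_ne_zero x (hz2 x hy x (Or.inl hx))
    · exact G.genEntry_self_ne_zero x (hz1 x (Or.inl (Or.inr hy)) x hx)
    · exact G.genEntry_self_ne_zero x (hz2 x hy x (Or.inr (Or.inr rfl)))
    · exact hvlj hy
  · rintro x y hxy (hx | rfl) hy
    · rw [hU] at hy
      have hrow : y ∈ R1 ∪ (Kmid ∪ {vj}) ∪ R3 := hrowpart ▸ fun h => hy (Or.inr h)
      rcases hrow with (h | h) | h
      · exact absurd (Or.inl h) hy
      · exact absurd (hz1 y (Or.inl h) x hx) (genEntry_ne_zero_of_edge hxy)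
      · exact absurd (hz1 y (Or.inr h) x hx) (genEntry_ne_zero_of_edge hxy)
    · rfl
  · rintro x y hxy hx (hy | rfl)
    · rw [hD] at hx
      have hcol : x ∈ C1 ∪ (Kmid ∪ {vl}) ∪ C3 := hcolpart ▸ fun h => hx (Or.inr h)
      rcases hcol with h | h
      · exact absurd (hz2 y hy x h) (genEntry_ne_zero_of_edge hxy)
      · exact absurd (Or.inl h) hx
    · rfl

end BlockTriangular

end IONetwork

theorem stmt_18_general {V : Type} [Fintype V] [DecidableEq V] (G : IONetwork V)
    (hcore : G.IsCore) (vl vj : V) (Kmid : Set V)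
    (hvlj : vl ≠ vj) (hvl : vl ∉ Kmid) (hvj : vj ∉ Kmid)
    (R1 R3 C1 C3 : Set V)
    (hrowpart : R1 ∪ (Kmid ∪ {vj}) ∪ R3 = {v : V | v ≠ G.inp})
    (hd3 : Disjoint (Kmid ∪ {vj}) R3)
    (hcolpart : C1 ∪ (Kmid ∪ {vl}) ∪ C3 = {v : V | v ≠ G.out})
    (hd4 : Disjoint C1 (Kmid ∪ {vl}))
    (hsq1 : R1.ncard = C1.ncard) (hsq3 : R3.ncard = C3.ncard)
    (hz1 : ∀ r ∈ (Kmid ∪ {vj}) ∪ R3, ∀ c ∈ C1, G.genEntry c r = 0)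
    (hz2 : ∀ r ∈ R3, ∀ c ∈ C1 ∪ (Kmid ∪ {vl}), G.genEntry c r = 0)
    (hirr : ¬ ∃ Rs Cs : Set V, Rs ⊆ Kmid ∪ {vj} ∧ Cs ⊆ Kmid ∪ {vl} ∧
        Rs.Nonempty ∧ Cs.Nonempty ∧ Rs.ncard + Cs.ncard = (Kmid ∪ {vj}).ncard ∧
        ∀ r ∈ Rs, ∀ c ∈ Cs, G.genEntry c r = 0) :
    G.SSAdjacent vl vj ∧ ∀ v ∈ Kmid, ¬ G.SuperSimple v := by
  have hB := IONetwork.isGatedSplit_of_blockTriangular hvlj hvl hvj hrowpart hcolpart hd3 hd4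
    hsq1 hsq3 hz1 hz2
  have hnotSS : ∀ v ∈ Kmid, ¬ G.SuperSimple v := fun v hv hss =>
    hirr (hB.isReducibleBlock hcore Kmid.toFinite hvl hvj hv hss)
  have hpath := fun p (hp : G.IsIOSimplePath p) => hB.before_of_isIOSimplePath hp
  refine ⟨⟨fun p hp => (hpath p hp).1.1, fun p hp => (hpath p hp).1.2.1, hvlj,
    fun p hp => (hpath p hp).1, fun c hc p hp hlcj => ?_⟩, hnotSS⟩
  exact hnotSS c ((hpath p hp).2 c hlcj.1 hlcj.2) hc

/-- Propositions 6.8, 6.9 and Corollary 6.10.  Suppose row and column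
permutations bring the generic homeostasis matrix `H` of a core network to block upper
triangular form with an irreducible structural diagonal block `B_η`: its rows are the
rows of `H` indexed by `Kmid ∪ {vj}`, its columns are the columns of `H` indexed by
`Kmid ∪ {vl}` (so `B_η` contains exactly the self-couplings of the nodes of `Kmid`).
Then `vl` and `vj` are adjacent super-simple nodes of `G` and no node of `Kmid` is
super-simple. -/
theorem stmt_18 {V : Type} [Fintype V] [DecidableEq V] (G : IONetwork V)
    (hcore : G.IsCore) (vl vj : V) (Kmid : Set V)
    (hvlj : vl ≠ vj) (hvl : vl ∉ Kmid) (hvj : vj ∉ Kmid)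
    (R1 R3 C1 C3 : Set V)
    (hrowpart : R1 ∪ (Kmid ∪ {vj}) ∪ R3 = {v : V | v ≠ G.inp})
    (hd1 : Disjoint R1 (Kmid ∪ {vj})) (hd2 : Disjoint R1 R3)
    (hd3 : Disjoint (Kmid ∪ {vj}) R3)
    (hcolpart : C1 ∪ (Kmid ∪ {vl}) ∪ C3 = {v : V | v ≠ G.out})
    (hd4 : Disjoint C1 (Kmid ∪ {vl})) (hd5 : Disjoint C1 C3)
    (hd6 : Disjoint (Kmid ∪ {vl}) C3)
    (hsq1 : R1.ncard = C1.ncard) (hsq3 : R3.ncard = C3.ncard)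
    (hz1 : ∀ r ∈ (Kmid ∪ {vj}) ∪ R3, ∀ c ∈ C1, G.genEntry c r = 0)
    (hz2 : ∀ r ∈ R3, ∀ c ∈ C1 ∪ (Kmid ∪ {vl}), G.genEntry c r = 0)
    (hirr : ¬ ∃ Rs Cs : Set V, Rs ⊆ Kmid ∪ {vj} ∧ Cs ⊆ Kmid ∪ {vl} ∧
        Rs.Nonempty ∧ Cs.Nonempty ∧ Rs.ncard + Cs.ncard = (Kmid ∪ {vj}).ncard ∧
        ∀ r ∈ Rs, ∀ c ∈ Cs, G.genEntry c r = 0) :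
    G.SSAdjacent vl vj ∧ ∀ v ∈ Kmid, ¬ G.SuperSimple v :=
  stmt_18_general G hcore vl vj Kmid hvlj hvl hvj R1 R3 C1 C3 hrowpart hd3 hcolpart hd4 hsq1 hsq3
    hz1 hz2 hirr
end
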